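/- arXiv:1208.6193 — 7 statements merged into one kernel-verified Lean document; each statement's English description precedes it below -/
import Mathlib

section
/- Let 𝔤 be a finite-dimensional real Lie algebra with an invariant inner product ⟨·,·⟩ (i.e., ⟨[X,Y],Z⟩ = ⟨X,[Y,Z]⟩ for all X,Y,Z ∈ 𝔤), and for L ∈ 𝔤 let P_L denote the orthogonal projection of 𝔤 onto the range of ad_L = [L,·]. Then for all L, N, X ∈ 𝔤 one has −⟨[L,X], N⟩ = ⟨[L,N], P_L X⟩, and [L,N] lies in the range of ad_L. Consequently, the vector field L ↦ [L,[L,N]] is the gradient of the function H(L) = κ(L,N) (with κ = −⟨·,·⟩) relative to the normal metric, which pairs tangent vectors [L,X] and [L,Y] via ⟨P_L X, P_L Y⟩. -/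
open scoped InnerProductSpace

/-!
The trilinear form `⟪⁅A, B⁆, C⟫` is invariant under cyclic permutations and vanishes when
`B = C`, so by polarization it is skew in its last two arguments: `⟪⁅L, X⁆, N⟫ = -⟪⁅L, N⁆, X⟫`.
Since `⁅L, N⁆` lies in the range of `P_L`, pairing it with `P_L X` is the same as pairing
it with `X`.
-/

/- Stated for an arbitrary operation `b` because `LieRing g` carries its own additive
structure, unrelated a priori to that of the inner product space: additivity in every slot
comes from the inner product through cyclicity. -/
theorem inner_eq_neg_inner_swap_of_cyclic {V : Type*} [NormedAddCommGroup V]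
    [InnerProductSpace ℝ V] (b : V → V → V)
    (hcyc : ∀ A B C, ⟪b A B, C⟫_ℝ = ⟪b B C, A⟫_ℝ) (halt : ∀ A B, ⟪b A B, B⟫_ℝ = 0)
    (A B C : V) : ⟪b A B, C⟫_ℝ = -⟪b A C, B⟫_ℝ := by
  have hadd : ∀ B B' C, ⟪b A (B + B'), C⟫_ℝ = ⟪b A B, C⟫_ℝ + ⟪b A B', C⟫_ℝ := by
    intro B B' C
    rw [hcyc, hcyc, inner_add_right, ← hcyc C, ← hcyc C, ← hcyc B, ← hcyc B']
  have hpolar := halt A (B + C)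
  rw [hadd, inner_add_right, inner_add_right, halt, halt] at hpolar
  linear_combination hpolar

theorem inner_lie_self_eq_zero {g : Type*} [NormedAddCommGroup g] [InnerProductSpace ℝ g]
    [LieRing g] (hinv : ∀ X Y Z : g, ⟪⁅X, Y⁆, Z⟫_ℝ = ⟪X, ⁅Y, Z⁆⟫_ℝ) (A B : g) :
    ⟪A, ⁅B, B⁆⟫_ℝ = 0 := by
  -- `⁅B, B⁆` is the zero of the Lie ring, which pairs with every `A` like with itself.
  have hconst : ∀ A : g, ⟪A, ⁅B, B⁆⟫_ℝ = ⟪⁅B, B⁆, ⁅B, B⁆⟫_ℝ := fun A =>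
    calc ⟪A, ⁅B, B⁆⟫_ℝ = ⟪A, ⁅⁅B, B⁆, ⁅B, B⁆⁆⟫_ℝ := by rw [lie_self, lie_self]
      _ = ⟪⁅A, ⁅B, B⁆⁆, ⁅B, B⁆⟫_ℝ := (hinv _ _ _).symm
      _ = ⟪⁅B, B⁆, ⁅B, B⁆⟫_ℝ := by rw [lie_self, lie_zero]
  exact (hconst A).trans ((hconst _).symm.trans (inner_zero_left _))

theorem inner_lie_eq_neg_inner_lie {g : Type*} [NormedAddCommGroup g] [InnerProductSpace ℝ g]
    [LieRing g] (hinv : ∀ X Y Z : g, ⟪⁅X, Y⁆, Z⟫_ℝ = ⟪X, ⁅Y, Z⁆⟫_ℝ) (L X N : g) :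
    ⟪⁅L, X⁆, N⟫_ℝ = -⟪⁅L, N⁆, X⟫_ℝ :=
  inner_eq_neg_inner_swap_of_cyclic (⁅·, ·⁆) (fun A B C => by rw [hinv, real_inner_comm])
    (fun A B => by rw [hinv, inner_lie_self_eq_zero hinv]) L X N

theorem stmt_0_general
    {g : Type*} [NormedAddCommGroup g] [InnerProductSpace ℝ g]
    [FiniteDimensional ℝ g] [LieRing g]
    (hinv : ∀ X Y Z : g, ⟪⁅X, Y⁆, Z⟫_ℝ = ⟪X, ⁅Y, Z⁆⟫_ℝ)
    (L N X : g) :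
    -⟪⁅L, X⁆, N⟫_ℝ =
      ⟪⁅L, N⁆,
        ((Submodule.orthogonalProjectionOnto (@Submodule.span ℝ g _ (@NormedAddCommGroup.toAddCommGroup g _).toAddCommMonoid _ {z : g | ∃ Y, ⁅L, Y⁆ = z}) X : g))⟫_ℝ ∧
    ⁅L, N⁆ ∈ @Submodule.span ℝ g _ (@NormedAddCommGroup.toAddCommGroup g _).toAddCommMonoid _ {z : g | ∃ Y, ⁅L, Y⁆ = z} := by
  let : AddCommGroup g := NormedAddCommGroup.toAddCommGroup
  have hmem : ⁅L, N⁆ ∈ Submodule.span ℝ {z : g | ∃ Y, ⁅L, Y⁆ = z} :=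
    Submodule.subset_span ⟨N, rfl⟩
  refine ⟨?_, hmem⟩
  rw [inner_lie_eq_neg_inner_lie hinv, neg_neg]
  exact (Submodule.inner_orthogonalProjectionOnto_eq_of_mem_left ⟨_, hmem⟩ X).symm

/-- Let `𝔤` be a finite-dimensional real Lie algebra with an invariant inner product,
and let `P_L` be the orthogonal projection onto the range of `ad_L`.  Then
`−⟨[L,X], N⟩ = ⟨[L,N], P_L X⟩` and `[L,N]` lies in the range of `ad_L`; hence
`L ↦ [L,[L,N]]` is the gradient of `H(L) = κ(L,N)` (with `κ = −⟨·,·⟩`) relative to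
the normal metric `([L,X],[L,Y]) ↦ ⟨P_L X, P_L Y⟩`. -/
theorem stmt_0
    {g : Type*} [NormedAddCommGroup g] [InnerProductSpace ℝ g]
    [FiniteDimensional ℝ g] [LieRing g]
    (hsmul : ∀ (c : ℝ) (X Y : g), ⁅X, c • Y⁆ = c • ⁅X, Y⁆)
    (hinv : ∀ X Y Z : g, ⟪⁅X, Y⁆, Z⟫_ℝ = ⟪X, ⁅Y, Z⁆⟫_ℝ)
    (L N X : g) :
    -⟪⁅L, X⁆, N⟫_ℝ =
      ⟪⁅L, N⁆,
        ((Submodule.orthogonalProjectionOnto (@Submodule.span ℝ g _ (@NormedAddCommGroup.toAddCommGroup g _).toAddCommMonoid _ {z : g | ∃ Y, ⁅L, Y⁆ = z}) X : g))⟫_ℝ ∧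
    ⁅L, N⁆ ∈ @Submodule.span ℝ g _ (@NormedAddCommGroup.toAddCommGroup g _).toAddCommMonoid _ {z : g | ∃ Y, ⁅L, Y⁆ = z} :=
  stmt_0_general hinv L N X
end

section
/- Let 𝔤 be a finite-dimensional real Lie algebra with an invariant inner product ⟨·,·⟩, and for L ∈ 𝔤 let P_L denote the orthogonal projection of 𝔤 onto the range of ad_L. Let H : 𝔤 → ℝ be differentiable and let ∇H(L) ∈ 𝔤 denote its gradient relative to ⟨·,·⟩, i.e., dH(L)(Y) = ⟨∇H(L), Y⟩ for all Y ∈ 𝔤. Then for all L, X ∈ 𝔤 one has dH(L)([L,X]) = ⟨−[L,∇H(L)], P_L X⟩, and −[L,∇H(L)] lies in the range of ad_L. Consequently, the gradient of H relative to the normal metric is grad H(L) = −[L,[L,∇H(L)]]. -/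
open scoped InnerProductSpace

set_option linter.overlappingInstances false

/-!
Invariance moves the bracket across the inner product: `⟪∇H, [L,X]⟫ = ⟪[∇H,L], X⟫ = ⟪-[L,∇H], X⟫`.
Since `-[L,∇H] = [L,-∇H]` lies in the range of `ad_L`, pairing it with `X` is the same as pairing
it with `P_L X`.
-/

theorem Submodule.inner_orthogonalProjectionOnto_eq_of_mem {E : Type*} [NormedAddCommGroup E]
    [InnerProductSpace ℝ E] (K : Submodule ℝ E) [K.HasOrthogonalProjection] {v : E} (hv : v ∈ K)
    (X : E) : ⟪v, (K.orthogonalProjectionOnto X : E)⟫_ℝ = ⟪v, X⟫_ℝ :=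
  K.inner_orthogonalProjectionOnto_eq_of_mem_left ⟨v, hv⟩ X

section InvariantInnerProduct

variable {g : Type*} [NormedAddCommGroup g] [InnerProductSpace ℝ g] [LieRing g]

-- The additive structures of the norm and of the Lie ring are unrelated instances on `g`, so
-- `ad_L` is not an `ℝ`-linear map here and its range is taken to be the span of its values.
abbrev adRange (L : g) :
    @Submodule ℝ g _ (@NormedAddCommGroup.toAddCommGroup g _).toAddCommMonoid _ :=
  @Submodule.span ℝ g _ (@NormedAddCommGroup.toAddCommGroup g _).toAddCommMonoid _
    {z : g | ∃ Y, ⁅L, Y⁆ = z}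

theorem neg_lie_mem_adRange (L Y : g) : -⁅L, Y⁆ ∈ adRange L :=
  @Submodule.subset_span ℝ g _ (@NormedAddCommGroup.toAddCommGroup g _).toAddCommMonoid _ _ _
    ⟨-Y, lie_neg L Y⟩

theorem inner_lie_right_eq_inner_neg_lie (hinv : ∀ X Y Z : g, ⟪⁅X, Y⁆, Z⟫_ℝ = ⟪X, ⁅Y, Z⁆⟫_ℝ)
    (L X Y : g) : ⟪Y, ⁅L, X⁆⟫_ℝ = ⟪-⁅L, Y⁆, X⟫_ℝ := by
  rw [← hinv, lie_skew]

end InvariantInnerProduct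

theorem stmt_1_general
    {g : Type*} [NormedAddCommGroup g] [InnerProductSpace ℝ g]
    [FiniteDimensional ℝ g] [LieRing g]
    (hinv : ∀ X Y Z : g, ⟪⁅X, Y⁆, Z⟫_ℝ = ⟪X, ⁅Y, Z⁆⟫_ℝ)
    (H : g → ℝ) (gradH : g → g)
    (hgrad : ∀ L Y : g, @fderiv ℝ _ g (@NormedAddCommGroup.toAddCommGroup g _) _ _ ℝ _ _ _ H L Y = ⟪gradH L, Y⟫_ℝ)
    (L X : g) :
    @fderiv ℝ _ g (@NormedAddCommGroup.toAddCommGroup g _) _ _ ℝ _ _ _ H L ⁅L, X⁆ =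
      ⟪-⁅L, gradH L⁆,
        ((Submodule.orthogonalProjectionOnto (@Submodule.span ℝ g _ (@NormedAddCommGroup.toAddCommGroup g _).toAddCommMonoid _ {z : g | ∃ Y, ⁅L, Y⁆ = z}) X : g))⟫_ℝ ∧
    -⁅L, gradH L⁆ ∈ @Submodule.span ℝ g _ (@NormedAddCommGroup.toAddCommGroup g _).toAddCommMonoid _ {z : g | ∃ Y, ⁅L, Y⁆ = z} := by
  have hmem : -⁅L, gradH L⁆ ∈ adRange L := neg_lie_mem_adRange L (gradH L)
  refine ⟨?_, hmem⟩
  rw [hgrad, inner_lie_right_eq_inner_neg_lie hinv,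
    (adRange L).inner_orthogonalProjectionOnto_eq_of_mem hmem]

/-- Let `𝔤` be a finite-dimensional real Lie algebra with an invariant inner product,
`P_L` the orthogonal projection onto the range of `ad_L`, `H : 𝔤 → ℝ` differentiable
with gradient `∇H` relative to the inner product.  Then
`dH(L)([L,X]) = ⟨−[L,∇H(L)], P_L X⟩` and `−[L,∇H(L)]` lies in the range of `ad_L`;
hence the gradient of `H` for the normal metric is `grad H(L) = −[L,[L,∇H(L)]]`. -/
theorem stmt_1
    {g : Type*} [NormedAddCommGroup g] [InnerProductSpace ℝ g]
    [FiniteDimensional ℝ g] [LieRing g]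
    (hsmul : ∀ (c : ℝ) (X Y : g), ⁅X, c • Y⁆ = c • ⁅X, Y⁆)
    (hinv : ∀ X Y Z : g, ⟪⁅X, Y⁆, Z⟫_ℝ = ⟪X, ⁅Y, Z⁆⟫_ℝ)
    (H : g → ℝ) (hH : @Differentiable ℝ _ g (@NormedAddCommGroup.toAddCommGroup g _) _ _ ℝ _ _ _ H) (gradH : g → g)
    (hgrad : ∀ L Y : g, @fderiv ℝ _ g (@NormedAddCommGroup.toAddCommGroup g _) _ _ ℝ _ _ _ H L Y = ⟪gradH L, Y⟫_ℝ)
    (L X : g) :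
    @fderiv ℝ _ g (@NormedAddCommGroup.toAddCommGroup g _) _ _ ℝ _ _ _ H L ⁅L, X⁆ =
      ⟪-⁅L, gradH L⁆,
        ((Submodule.orthogonalProjectionOnto (@Submodule.span ℝ g _ (@NormedAddCommGroup.toAddCommGroup g _).toAddCommMonoid _ {z : g | ∃ Y, ⁅L, Y⁆ = z}) X : g))⟫_ℝ ∧
    -⁅L, gradH L⁆ ∈ @Submodule.span ℝ g _ (@NormedAddCommGroup.toAddCommGroup g _).toAddCommMonoid _ {z : g | ∃ Y, ⁅L, Y⁆ = z} :=
  stmt_1_general hinv H gradH hgrad L X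
end

section
/- Let n ≥ 1 and let a : ℝ → ℝ^{n−1}, b : ℝ → ℝⁿ be differentiable, with the convention a_0 := 0, a_n := 0. Define the symmetric tridiagonal matrix L(t) with L_{kk} = b_k, L_{k,k+1} = L_{k+1,k} = a_k and all other entries zero, and the skew-symmetric tridiagonal matrix B(t) with B_{k,k+1} = a_k, B_{k+1,k} = −a_k and all other entries zero. Then L'(t) = B(t)L(t) − L(t)B(t) for all t if and only if ȧ_k = a_k(b_{k+1} − b_k) for k = 1,…,n−1 and ḃ_k = 2(a_k² − a_{k−1}²) for k = 1,…,n. -/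
/-!
Write `L = D + U + Uᵀ` and `B = U - Uᵀ` with `D` diagonal and `U` the superdiagonal part. Since
`[U, U] = 0` and `[U, D]ᵀ = [D, Uᵀ]`, one gets `[B, L] = 2[U, Uᵀ] + [U, D] + [U, D]ᵀ`. Here
`[U, D]` is again superdiagonal, with entries `a_k (b_{k+1} - b_k)`, and `[U, Uᵀ]` is diagonal,
with entries `a_k² - a_{k-1}²` once the boundary values `a_0 = a_n = 0` are used. So `[B, L]` is
the Jacobi matrix of the right-hand sides of the Toda flow, and the Lax equation says that its
entries are those of `L'`.
-/

open Matrix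

namespace Toda

variable {R : Type*} [CommRing R] {n : ℕ}

def superdiag (a : ℕ → R) : Matrix (Fin n) (Fin n) R :=
  of fun i j => if (i : ℕ) + 1 = j then a (i + 1) else 0

def jacobi (a b : ℕ → R) : Matrix (Fin n) (Fin n) R :=
  diagonal (fun i : Fin n => b (i + 1)) + superdiag a + (superdiag a)ᵀ

def skewJacobi (a : ℕ → R) : Matrix (Fin n) (Fin n) R :=
  superdiag a - (superdiag a)ᵀ

theorem jacobi_apply (a b : ℕ → R) (i j : Fin n) :
    jacobi a b i j =
      if (i : ℕ) = j then b (i + 1)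
      else if (i : ℕ) + 1 = j then a (i + 1)
      else if (j : ℕ) + 1 = i then a (j + 1)
      else 0 := by
  simp only [jacobi, superdiag, Matrix.add_apply, diagonal_apply, transpose_apply, of_apply,
    Fin.ext_iff]
  split_ifs <;> first | omega | simp

theorem skewJacobi_apply (a : ℕ → R) (i j : Fin n) :
    skewJacobi a i j =
      if (i : ℕ) + 1 = j then a (i + 1)
      else if (j : ℕ) + 1 = i then -a (j + 1)
      else 0 := by
  simp only [skewJacobi, superdiag, Matrix.sub_apply, transpose_apply, of_apply]
  split_ifs <;> first | omega | simp

theorem superdiag_mul_diagonal_sub (a b : ℕ → R) :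
    superdiag a * diagonal (fun i : Fin n => b (i + 1)) -
        diagonal (fun i : Fin n => b (i + 1)) * superdiag a =
      superdiag fun k => a k * (b (k + 1) - b k) := by
  ext i j
  simp only [superdiag, Matrix.sub_apply, mul_diagonal, diagonal_mul, of_apply]
  split_ifs with h
  · rw [← h]; ring
  · simp

theorem superdiag_mul_transpose (a : ℕ → R) (han : a n = 0) :
    superdiag a * (superdiag a)ᵀ = diagonal fun i : Fin n => a (i + 1) ^ 2 := by
  ext i j
  simp only [superdiag, mul_apply, transpose_apply, of_apply, diagonal_apply, mul_ite, ite_mul,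
    zero_mul, mul_zero]
  rw [Fin.sum_univ_eq_sum_range
    (fun k => if (j : ℕ) + 1 = k then if (i : ℕ) + 1 = k then a (i + 1) * a (j + 1) else 0
      else 0) n,
    Finset.sum_ite_eq]
  simp only [Finset.mem_range, Fin.ext_iff, add_left_inj]
  split_ifs with hj hij hij <;> try rfl
  · rw [hij, sq]
  · rw [hij, show (j : ℕ) + 1 = n by omega, han]; ring

theorem transpose_mul_superdiag (a : ℕ → R) (ha0 : a 0 = 0) :
    (superdiag a)ᵀ * superdiag a = diagonal fun i : Fin n => a i ^ 2 := by
  ext i j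
  simp only [superdiag, mul_apply, transpose_apply, of_apply, diagonal_apply, mul_ite, ite_mul,
    zero_mul, mul_zero]
  by_cases hij : i = j
  · subst hij
    obtain ⟨_ | m, hm⟩ := i
    · simp [ha0]
    · rw [Finset.sum_eq_single ⟨m, by omega⟩]
      · simp [sq]
      · intro k _ hk
        have hk' : (k : ℕ) ≠ m := fun h => hk (Fin.ext h)
        simp [hk']
      · simp
  · rw [if_neg hij]
    refine Finset.sum_eq_zero fun k _ => ?_
    simp only [Fin.ext_iff] at hij
    split_ifs <;> first | omega | rfl

theorem skewJacobi_mul_sub_mul_skewJacobi (a b : ℕ → R) (ha0 : a 0 = 0) (han : a n = 0) :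
    (skewJacobi a : Matrix (Fin n) (Fin n) R) * jacobi a b - jacobi a b * skewJacobi a =
      jacobi (fun k => a k * (b (k + 1) - b k)) (fun k => 2 * (a k ^ 2 - a (k - 1) ^ 2)) := by
  set U : Matrix (Fin n) (Fin n) R := superdiag a
  set D : Matrix (Fin n) (Fin n) R := diagonal fun i => b (i + 1)
  have hcomm : (U - Uᵀ) * (D + U + Uᵀ) - (D + U + Uᵀ) * (U - Uᵀ) =
      2 * (U * Uᵀ - Uᵀ * U) + (U * D - D * U) + (U * D - D * U)ᵀ := by
    rw [transpose_sub, transpose_mul, transpose_mul, diagonal_transpose]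
    noncomm_ring
  rw [skewJacobi, jacobi, hcomm, superdiag_mul_transpose a han, transpose_mul_superdiag a ha0,
    superdiag_mul_diagonal_sub, diagonal_sub, ← diagonal_ofNat, diagonal_mul_diagonal, jacobi]
  simp only [Nat.add_sub_cancel]

theorem jacobi_eq_jacobi_iff {a b a' b' : ℕ → R} :
    (jacobi a b : Matrix (Fin n) (Fin n) R) = jacobi a' b' ↔
      (∀ k, 1 ≤ k → k < n → a k = a' k) ∧ (∀ k, 1 ≤ k → k ≤ n → b k = b' k) := by
  constructor
  · intro h
    refine ⟨fun k hk hkn => ?_, fun k hk hkn => ?_⟩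
    · have hne : k - 1 ≠ k := by omega
      simpa [jacobi_apply, hne, Nat.sub_add_cancel hk] using
        congr_fun₂ h ⟨k - 1, by omega⟩ ⟨k, hkn⟩
    · simpa [jacobi_apply, Nat.sub_add_cancel hk] using
        congr_fun₂ h ⟨k - 1, by omega⟩ ⟨k - 1, by omega⟩
  · rintro ⟨ha, hb⟩
    ext i j
    simp only [jacobi_apply]
    split_ifs
    · exact hb _ (by omega) (by omega)
    · exact ha _ (by omega) (by omega)
    · exact ha _ (by omega) (by omega)
    · rfl

theorem hasDerivAt_jacobi_apply {𝕜 : Type*} [NontriviallyNormedField 𝕜]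
    {a b : 𝕜 → ℕ → 𝕜} {a' b' : ℕ → 𝕜} {t : 𝕜} (ha : ∀ k, HasDerivAt (fun s => a s k) (a' k) t)
    (hb : ∀ k, HasDerivAt (fun s => b s k) (b' k) t) (i j : Fin n) :
    HasDerivAt (fun s => jacobi (a s) (b s) i j) (jacobi a' b' i j) t := by
  simp only [jacobi_apply]
  split_ifs
  exacts [hb _, ha _, ha _, hasDerivAt_const t 0]

end Toda

theorem stmt_4_general {n : ℕ}
    (a b a' b' : ℝ → ℕ → ℝ)
    (ha' : ∀ (t : ℝ) (k : ℕ), HasDerivAt (fun s => a s k) (a' t k) t)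
    (hb' : ∀ (t : ℝ) (k : ℕ), HasDerivAt (fun s => b s k) (b' t k) t)
    (ha0 : ∀ t, a t 0 = 0) (han : ∀ t, a t n = 0)
    (L B : ℝ → Matrix (Fin n) (Fin n) ℝ)
    (hLdef : ∀ (t : ℝ) (i j : Fin n),
      L t i j =
        if (i : ℕ) = (j : ℕ) then b t ((i : ℕ) + 1)
        else if (i : ℕ) + 1 = (j : ℕ) then a t ((i : ℕ) + 1)
        else if (j : ℕ) + 1 = (i : ℕ) then a t ((j : ℕ) + 1)
        else 0)
    (hBdef : ∀ (t : ℝ) (i j : Fin n),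
      B t i j =
        if (i : ℕ) + 1 = (j : ℕ) then a t ((i : ℕ) + 1)
        else if (j : ℕ) + 1 = (i : ℕ) then -(a t ((j : ℕ) + 1))
        else 0) :
    (∀ (t : ℝ) (i j : Fin n),
        HasDerivAt (fun s => L s i j) ((B t * L t - L t * B t) i j) t) ↔
    (∀ (t : ℝ) (k : ℕ),
        (1 ≤ k → k < n → a' t k = a t k * (b t (k + 1) - b t k)) ∧
        (1 ≤ k → k ≤ n → b' t k = 2 * ((a t k) ^ 2 - (a t (k - 1)) ^ 2))) := by
  have hL : ∀ t, L t = Toda.jacobi (a t) (b t) := fun t =>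
    ext fun i j => by rw [hLdef, Toda.jacobi_apply]
  have hB : ∀ t, B t = Toda.skewJacobi (a t) := fun t =>
    ext fun i j => by rw [hBdef, Toda.skewJacobi_apply]
  simp only [hL, hB, Toda.skewJacobi_mul_sub_mul_skewJacobi _ _ (ha0 _) (han _)]
  refine (forall_congr' fun t => ?_).trans (forall_congr' fun t => forall_and.symm)
  rw [← Toda.jacobi_eq_jacobi_iff]
  have hL' := Toda.hasDerivAt_jacobi_apply (n := n) (ha' t) (hb' t)
  exact ⟨fun h => ext fun i j => (hL' i j).unique (h i j), fun h i j => h ▸ hL' i j⟩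

/-- The Flaschka form of the Toda lattice is equivalent to the Lax equation:
with `L` symmetric tridiagonal (diagonal `b`, off-diagonals `a`) and `B`
skew-symmetric tridiagonal (off-diagonals `±a`), and `a, b` differentiable with
derivatives `a', b'`, one has `L' = BL − LB` (entrywise) if and only if
`ȧ_k = a_k(b_{k+1} − b_k)` for `1 ≤ k ≤ n−1` and `ḃ_k = 2(a_k² − a_{k−1}²)`
for `1 ≤ k ≤ n`, with the conventions `a_0 = a_n = 0`. -/
theorem stmt_4 {n : ℕ} (hn : 1 ≤ n)
    (a b a' b' : ℝ → ℕ → ℝ)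
    (ha' : ∀ (t : ℝ) (k : ℕ), HasDerivAt (fun s => a s k) (a' t k) t)
    (hb' : ∀ (t : ℝ) (k : ℕ), HasDerivAt (fun s => b s k) (b' t k) t)
    (ha0 : ∀ t, a t 0 = 0) (han : ∀ t, a t n = 0)
    (L B : ℝ → Matrix (Fin n) (Fin n) ℝ)
    (hLdef : ∀ (t : ℝ) (i j : Fin n),
      L t i j =
        if (i : ℕ) = (j : ℕ) then b t ((i : ℕ) + 1)
        else if (i : ℕ) + 1 = (j : ℕ) then a t ((i : ℕ) + 1)
        else if (j : ℕ) + 1 = (i : ℕ) then a t ((j : ℕ) + 1)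
        else 0)
    (hBdef : ∀ (t : ℝ) (i j : Fin n),
      B t i j =
        if (i : ℕ) + 1 = (j : ℕ) then a t ((i : ℕ) + 1)
        else if (j : ℕ) + 1 = (i : ℕ) then -(a t ((j : ℕ) + 1))
        else 0) :
    (∀ (t : ℝ) (i j : Fin n),
        HasDerivAt (fun s => L s i j) ((B t * L t - L t * B t) i j) t) ↔
    (∀ (t : ℝ) (k : ℕ),
        (1 ≤ k → k < n → a' t k = a t k * (b t (k + 1) - b t k)) ∧
        (1 ≤ k → k ≤ n → b' t k = 2 * ((a t k) ^ 2 - (a t (k - 1)) ^ 2))) :=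
  stmt_4_general a b a' b' ha' hb' ha0 han L B hLdef hBdef
end

section
/- Let J : ℝⁿ → M_n(ℝ) with J(x) antisymmetric for every x, G : ℝⁿ → M_n(ℝ) with G(x) symmetric positive semidefinite for every x, and H, S, C₁,…,C_m : ℝⁿ → ℝ continuously differentiable such that G(x)∇H(x) = 0, J(x)∇S(x) = 0, and J(x)∇C_i(x) = 0 and G(x)∇C_i(x) = 0 for all x and all i = 1,…,m. Suppose that at a point p₀ ∈ ℝⁿ there exist real numbers α ≠ 0 and β₁,…,β_m such that ∇S(p₀) = α∇H(p₀) + Σ_{i=1}^m β_i ∇C_i(p₀) (as given by the Lagrange multiplier theorem at a constrained maximum of S). Then p₀ is an equilibrium of the metriplectic dynamics: J(p₀)∇H(p₀) + G(p₀)∇S(p₀) = 0. -/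
/-! The Lagrange relation puts `∇S(p₀)` in the span of `∇H(p₀)` and the `∇Cᵢ(p₀)`, with a nonzero
coefficient on `∇H(p₀)`. Since `J(p₀)` kills `∇S` and every `∇Cᵢ`, it kills `α ∇H`, hence `∇H`;
since `G(p₀)` kills `∇H` and every `∇Cᵢ`, it kills `∇S`. -/

open Matrix

/-- The Euclidean gradient of `H : ℝⁿ → ℝ`. -/
noncomputable def euclGrad {n : ℕ} (H : (Fin n → ℝ) → ℝ) (x : Fin n → ℝ) :
    Fin n → ℝ :=
  fun i => fderiv ℝ H x (Pi.single i 1)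

namespace Matrix

variable {K ι m n : Type*} [Fintype n] [Fintype ι]

theorem mulVec_sum_smul_eq_zero [CommSemiring K] (A : Matrix m n K) (β : ι → K)
    {v : ι → n → K} (hv : ∀ i, A *ᵥ v i = 0) : A *ᵥ ∑ i, β i • v i = 0 := by
  rw [mulVec_sum]
  exact Finset.sum_eq_zero fun i _ => by rw [mulVec_smul, hv i, smul_zero]

theorem mulVec_smul_add_sum_smul_eq_zero [CommSemiring K] (A : Matrix m n K) (a : K)
    (β : ι → K) {u : n → K} {v : ι → n → K} (hu : A *ᵥ u = 0) (hv : ∀ i, A *ᵥ v i = 0) :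
    A *ᵥ (a • u + ∑ i, β i • v i) = 0 := by
  rw [mulVec_add, mulVec_smul, hu, smul_zero, zero_add, mulVec_sum_smul_eq_zero A β hv]

theorem mulVec_eq_zero_of_mulVec_smul_add_sum_smul_eq_zero [Field K] (A : Matrix m n K)
    {a : K} (ha : a ≠ 0) (β : ι → K) {u : n → K} {v : ι → n → K}
    (hw : A *ᵥ (a • u + ∑ i, β i • v i) = 0) (hv : ∀ i, A *ᵥ v i = 0) : A *ᵥ u = 0 := by
  rw [mulVec_add, mulVec_sum_smul_eq_zero A β hv, add_zero, mulVec_smul] at hw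
  exact (smul_eq_zero.mp hw).resolve_left ha

end Matrix

theorem stmt_7_general {n m : ℕ}
    (J G : (Fin n → ℝ) → Matrix (Fin n) (Fin n) ℝ)
    (H S : (Fin n → ℝ) → ℝ) (C : Fin m → (Fin n → ℝ) → ℝ)
    (hGH : ∀ x, G x *ᵥ euclGrad H x = 0)
    (hJS : ∀ x, J x *ᵥ euclGrad S x = 0)
    (hJC : ∀ i x, J x *ᵥ euclGrad (C i) x = 0)
    (hGC : ∀ i x, G x *ᵥ euclGrad (C i) x = 0)
    (p₀ : Fin n → ℝ) (α : ℝ) (hα : α ≠ 0) (β : Fin m → ℝ)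
    (hLagrange : euclGrad S p₀ =
      α • euclGrad H p₀ + ∑ i, β i • euclGrad (C i) p₀) :
    J p₀ *ᵥ euclGrad H p₀ + G p₀ *ᵥ euclGrad S p₀ = 0 := by
  have hJH : J p₀ *ᵥ euclGrad H p₀ = 0 :=
    (J p₀).mulVec_eq_zero_of_mulVec_smul_add_sum_smul_eq_zero hα β
      (hLagrange ▸ hJS p₀) (fun i => hJC i p₀)
  have hGS : G p₀ *ᵥ euclGrad S p₀ = 0 := by
    rw [hLagrange]
    exact (G p₀).mulVec_smul_add_sum_smul_eq_zero α β (hGH p₀) (fun i => hGC i p₀)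
  rw [hJH, hGS, add_zero]

/-- Maximum entropy principle yields equilibria: for a metriplectic system with
antisymmetric `J`, symmetric positive semidefinite `G`, degeneracies
`G∇H = 0`, `J∇S = 0`, and invariants `C i` satisfying `J∇Cᵢ = G∇Cᵢ = 0`, if at a
point `p₀` the Lagrange multiplier relation
`∇S(p₀) = α∇H(p₀) + Σ βᵢ∇Cᵢ(p₀)` holds with `α ≠ 0`, then `p₀` is an equilibrium:
`J(p₀)∇H(p₀) + G(p₀)∇S(p₀) = 0`. -/
theorem stmt_7 {n m : ℕ}
    (J G : (Fin n → ℝ) → Matrix (Fin n) (Fin n) ℝ)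
    (hJanti : ∀ x, (J x)ᵀ = -(J x))
    (hGpsd : ∀ x, (G x).PosSemidef)
    (H S : (Fin n → ℝ) → ℝ) (C : Fin m → (Fin n → ℝ) → ℝ)
    (hH : ContDiff ℝ 1 H) (hS : ContDiff ℝ 1 S) (hC : ∀ i, ContDiff ℝ 1 (C i))
    (hGH : ∀ x, G x *ᵥ euclGrad H x = 0)
    (hJS : ∀ x, J x *ᵥ euclGrad S x = 0)
    (hJC : ∀ i x, J x *ᵥ euclGrad (C i) x = 0)
    (hGC : ∀ i x, G x *ᵥ euclGrad (C i) x = 0)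
    (p₀ : Fin n → ℝ) (α : ℝ) (hα : α ≠ 0) (β : Fin m → ℝ)
    (hLagrange : euclGrad S p₀ =
      α • euclGrad H p₀ + ∑ i, β i • euclGrad (C i) p₀) :
    J p₀ *ᵥ euclGrad H p₀ + G p₀ *ᵥ euclGrad S p₀ = 0 :=
  stmt_7_general J G H S C hGH hJS hJC hGC p₀ α hα β hLagrange
end

section
/- Let u : ℝ × ℝ → ℝ be smooth and 2π-periodic in its second variable θ, and let w : ℝ × ℝ → ℝ be continuous, 2π-periodic in θ, with the θ-Fourier coefficients of w(t,·) satisfying ŵ(t,n) = −i·sign(n)·(∂_θ u)^(t,n) for all t ∈ ℝ and n ∈ ℤ (i.e., w(t,·) is the Hilbert transform of u_θ(t,·)). Suppose u satisfies the Landau-damped KdV (Ott–Sudan) equation u_t = −u_{θθθ} + 6 u u_θ − w. Then the KdV invariant t ↦ ∫_{−π}^{π} u(t,θ)² dθ is nonincreasing; indeed d/dt ∫_{−π}^{π} u² dθ = −4π Σ_{n∈ℤ} |n| |û(t,n)|² ≤ 0, where û(t,n) = (1/2π)∫_{−π}^{π} u(t,θ)e^{−inθ}dθ. -/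
open Real MeasureTheory intervalIntegral AddCircle

/-- The `n`-th Fourier coefficient of a `2π`-periodic function `v : ℝ → ℝ`:
`v̂(n) = (1/2π) ∫_{−π}^{π} v(θ) e^{−inθ} dθ`. -/
noncomputable def fourierCoef (v : ℝ → ℝ) (n : ℤ) : ℂ :=
  (1 / (2 * π) : ℝ) *
    ∫ θ in (-π : ℝ)..π, (v θ : ℂ) * Complex.exp (-Complex.I * n * θ)

lemma fact_pi : Fact (0 < 2 * π) := ⟨by positivity⟩

attribute [local instance] fact_pi

lemma fourier_eq_exp (n : ℤ) (x : ℝ) :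
    (fourier (-n) (x : AddCircle (2 * π)) : ℂ) = Complex.exp (-Complex.I * n * x) := by
  rw [fourier_coe_apply]
  congr 1
  have hπ : (π : ℂ) ≠ 0 := Complex.ofReal_ne_zero.mpr pi_ne_zero
  push_cast
  field_simp

lemma coef_eq (v : ℝ → ℝ) (per : Function.Periodic (fun θ : ℝ => (v θ : ℂ)) (2 * π)) (n : ℤ) :
    fourierCoeff per.lift n = fourierCoef v n := by
  rw [fourierCoeff_eq_intervalIntegral per.lift n (-π)]
  have h2 : -π + 2 * π = π := by ring
  rw [h2, fourierCoef]
  rw [Complex.real_smul]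
  congr 1
  refine intervalIntegral.integral_congr fun x _ => ?_
  rw [Function.Periodic.lift_coe, fourier_eq_exp, smul_eq_mul, mul_comm]

lemma periodic_lift_continuous {f : ℝ → ℂ} (per : Function.Periodic f (2 * π))
    (hf : Continuous f) : Continuous per.lift :=
  hf.quotient_liftOn' _

lemma parseval (v g : ℝ → ℝ) (hv : Continuous v)
    (hvp : Function.Periodic v (2 * π)) (hg : Continuous g)
    (hgp : Function.Periodic g (2 * π)) :
    HasSum (fun n : ℤ => (starRingEnd ℂ) (fourierCoef v n) * fourierCoef g n)
      (((1 / (2 * π) : ℝ) : ℂ) * ((∫ θ in (-π : ℝ)..π, v θ * g θ : ℝ) : ℂ)) := by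
  have perv : Function.Periodic (fun θ : ℝ => (v θ : ℂ)) (2 * π) := fun θ => by simp [hvp θ]
  have perg : Function.Periodic (fun θ : ℝ => (g θ : ℂ)) (2 * π) := fun θ => by simp [hgp θ]
  set F : AddCircle (2 * π) → ℂ := perv.lift with hF
  set G : AddCircle (2 * π) → ℂ := perg.lift with hG
  have hFc : Continuous F := periodic_lift_continuous _ (Complex.continuous_ofReal.comp hv)
  have hGc : Continuous G := periodic_lift_continuous _ (Complex.continuous_ofReal.comp hg)
  set Fcm : C(AddCircle (2 * π), ℂ) := ⟨F, hFc⟩ with hFcm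
  set Gcm : C(AddCircle (2 * π), ℂ) := ⟨G, hGc⟩ with hGcm
  set Flp := ContinuousMap.toLp (E := ℂ) 2 haarAddCircle ℂ Fcm with hFlp
  set Glp := ContinuousMap.toLp (E := ℂ) 2 haarAddCircle ℂ Gcm with hGlp
  have hs := fourierBasis.hasSum_inner_mul_inner Flp Glp
  have hrepr : ∀ (f : Lp ℂ 2 (@haarAddCircle (2 * π) _)) (i : ℤ),
      (inner ℂ (fourierBasis i) f : ℂ) = fourierCoeff (f : AddCircle (2 * π) → ℂ) i := by
    intro f i
    rw [← fourierBasis_repr, fourierBasis.repr_apply_apply]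
  have hcF : ∀ i : ℤ, (inner ℂ Flp (fourierBasis i) : ℂ) = (starRingEnd ℂ) (fourierCoef v i) := by
    intro i
    rw [← inner_conj_symm, hrepr]
    congr 1
    rw [show ((Flp : AddCircle (2*π) → ℂ)) = _ from rfl]
    rw [fourierCoeff_toLp (T := 2 * π) Fcm i]
    exact coef_eq v perv i
  have hcG : ∀ i : ℤ, (inner ℂ (fourierBasis i) Glp : ℂ) = fourierCoef g i := by
    intro i
    rw [hrepr]
    rw [show ((Glp : AddCircle (2*π) → ℂ)) = _ from rfl]
    rw [fourierCoeff_toLp (T := 2 * π) Gcm i]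
    exact coef_eq g perg i
  have hinner : (inner ℂ Flp Glp : ℂ) =
      ((1 / (2 * π) : ℝ) : ℂ) * ((∫ θ in (-π : ℝ)..π, v θ * g θ : ℝ) : ℂ) := by
    rw [MeasureTheory.L2.inner_def]
    have hae : ∀ᵐ x ∂(@haarAddCircle (2 * π) _),
        (inner ℂ (Flp x) (Glp x) : ℂ) = (starRingEnd ℂ) (F x) * G x := by
      filter_upwards [ContinuousMap.coeFn_toLp (p := 2) (μ := @haarAddCircle (2 * π) _) (𝕜 := ℂ) Fcm,
        ContinuousMap.coeFn_toLp (p := 2) (μ := @haarAddCircle (2 * π) _) (𝕜 := ℂ) Gcm] with x h1 h2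
      rw [RCLike.inner_apply, h1, h2]
      exact mul_comm _ _
    rw [integral_congr_ae hae]
    have hcont : Continuous fun x => (starRingEnd ℂ) (F x) * G x :=
      (Complex.continuous_conj.comp hFc).mul hGc
    have key : ∫ x, (starRingEnd ℂ) (F x) * G x ∂(@haarAddCircle (2 * π) _) =
        (1 / (2 * π) : ℝ) • ∫ x in (-π : ℝ)..(-π + 2 * π), (starRingEnd ℂ) (F x) * G x := by
      rw [AddCircle.intervalIntegral_preimage (2 * π) (-π)
        (fun z => (starRingEnd ℂ) (F z) * G z),
        volume_eq_smul_haarAddCircle, MeasureTheory.integral_smul_measure,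
        ENNReal.toReal_ofReal (Fact.out (p := (0:ℝ) < 2 * π)).le, ← smul_assoc, smul_eq_mul,
        one_div_mul_cancel (Fact.out (p := (0:ℝ) < 2 * π)).ne', one_smul]
    rw [key]
    have h2 : -π + 2 * π = π := by ring
    rw [h2, Complex.real_smul]
    congr 1
    rw [← intervalIntegral.integral_ofReal]
    refine intervalIntegral.integral_congr fun x _ => ?_
    show (starRingEnd ℂ) (F ↑x) * G ↑x = _
    rw [show F ↑x = (v x : ℂ) from Function.Periodic.lift_coe _ _,
      show G ↑x = (g x : ℂ) from Function.Periodic.lift_coe _ _,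
      Complex.conj_ofReal]
    push_cast
    ring
  rw [← hinner]
  have e : (fun n : ℤ => (starRingEnd ℂ) (fourierCoef v n) * fourierCoef g n) =
      fun i => inner ℂ Flp (fourierBasis i) * inner ℂ (fourierBasis i) Glp :=
    funext fun n => by rw [hcF n, hcG n]
  rw [e]
  exact hs

lemma exp_neg_I_pi (n : ℤ) :
    Complex.exp (-Complex.I * n * (π : ℝ)) = Complex.exp (-Complex.I * n * ((-π : ℝ) : ℝ)) := by
  have : (-Complex.I * n * (π : ℝ)) = -Complex.I * n * ((-π : ℝ) : ℝ) + (-n : ℤ) * (2 * π * Complex.I) := by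
    push_cast; ring
  rw [this, Complex.exp_add, Complex.exp_int_mul_two_pi_mul_I, mul_one]

lemma coef_deriv (v : ℝ → ℝ) (hv : ContDiff ℝ (⊤ : ℕ∞) v)
    (hvp : Function.Periodic v (2 * π)) (n : ℤ) :
    fourierCoef (deriv v) n = Complex.I * n * fourierCoef v n := by
  have hv' : ContDiff ℝ (⊤ : ℕ∞) v := hv.of_le (by simp)
  have hdv : Differentiable ℝ v := hv.differentiable (by simp)
  have hdvc : Continuous (deriv v) := ((contDiff_infty_iff_deriv.mp hv').2).continuous
  set e : ℝ → ℂ := fun θ => Complex.exp (-Complex.I * n * θ) with he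
  have hec : Continuous e := by
    apply Complex.continuous_exp.comp
    exact (continuous_const.mul Complex.continuous_ofReal)
  have hΦ : ∀ θ : ℝ, HasDerivAt (fun θ : ℝ => (v θ : ℂ) * e θ)
      (((deriv v θ : ℝ) : ℂ) * e θ + (v θ : ℂ) * (e θ * (-Complex.I * n))) θ := by
    intro θ
    have h1 : HasDerivAt (fun θ : ℝ => ((v θ : ℝ) : ℂ)) ((deriv v θ : ℝ) : ℂ) θ :=
      HasDerivAt.ofReal_comp ((hdv θ).hasDerivAt)
    have h2 : HasDerivAt (fun θ : ℝ => -Complex.I * (n : ℂ) * (θ : ℝ)) (-Complex.I * n) θ := by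
      simpa using ((hasDerivAt_id θ).ofReal_comp).const_mul (-Complex.I * (n : ℂ))
    exact h1.mul h2.cexp
  have hint : ∀ (f : ℝ → ℂ), Continuous f → IntervalIntegrable f volume (-π) π :=
    fun f hf => hf.intervalIntegrable _ _
  have hFTC := intervalIntegral.integral_eq_sub_of_hasDerivAt
    (f := fun θ : ℝ => (v θ : ℂ) * e θ) (a := -π) (b := π)
    (fun θ _ => hΦ θ)
    (hint _ (((Complex.continuous_ofReal.comp hdvc).mul hec).add
      ((Complex.continuous_ofReal.comp hv.continuous).mul (hec.mul continuous_const))))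
  have hvππ : v π = v (-π) := by
    have := hvp (-π); rw [show -π + 2 * π = π by ring] at this; exact this
  have hzero : (∫ θ in (-π : ℝ)..π,
      (((deriv v θ : ℝ) : ℂ) * e θ + (v θ : ℂ) * (e θ * (-Complex.I * n)))) = 0 := by
    rw [hFTC]
    simp only [he, hvππ]
    rw [exp_neg_I_pi n]
    ring
  have hi1 : IntervalIntegrable (fun θ : ℝ => ((deriv v θ : ℝ) : ℂ) * e θ) volume (-π) π :=
    hint _ (by exact (Complex.continuous_ofReal.comp hdvc).mul hec)
  have hi2 : IntervalIntegrable (fun θ : ℝ => (v θ : ℂ) * (e θ * (-Complex.I * n))) volume (-π) π :=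
    hint _ (by exact (Complex.continuous_ofReal.comp hv.continuous).mul (hec.mul continuous_const))
  rw [intervalIntegral.integral_add hi1 hi2] at hzero
  have hsplit : (∫ θ in (-π : ℝ)..π, (v θ : ℂ) * (e θ * (-Complex.I * n))) =
      (-Complex.I * n) * ∫ θ in (-π : ℝ)..π, (v θ : ℂ) * e θ := by
    rw [← intervalIntegral.integral_const_mul]
    refine intervalIntegral.integral_congr fun x _ => by ring
  rw [hsplit] at hzero
  have hders : (∫ θ in (-π : ℝ)..π, ((deriv v θ : ℝ) : ℂ) * e θ) =
      Complex.I * n * ∫ θ in (-π : ℝ)..π, (v θ : ℂ) * e θ := by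
    have := eq_neg_of_add_eq_zero_left hzero
    rw [this]; ring
  rw [fourierCoef, fourierCoef, hders]
  ring

lemma periodic_deriv' {f : ℝ → ℝ} {c : ℝ} (hf : Function.Periodic f c) :
    Function.Periodic (deriv f) c := by
  intro x
  have hfun : (fun y => f (y + c)) = f := funext hf
  calc deriv f (x + c) = deriv (fun y => f (y + c)) x := (deriv_comp_add_const f c x).symm
    _ = deriv f x := by rw [hfun]

/-- For the Landau-damped (Ott–Sudan) KdV equation
`u_t = −u_{θθθ} + 6uu_θ − 𝓗(u_θ)`, with `u` smooth and `2π`-periodic in `θ` and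
`w(t,·) = 𝓗(u_θ(t,·))` characterized by its Fourier coefficients, the KdV
invariant `∫ u² dθ` is nonincreasing, with
`d/dt ∫ u² dθ = −4π Σ_{n∈ℤ} |n| |û(t,n)|² ≤ 0`. -/
theorem stmt_14 (u w : ℝ → ℝ → ℝ)
    (hu : ContDiff ℝ (⊤ : ℕ∞) fun p : ℝ × ℝ => u p.1 p.2)
    (huper : ∀ t θ, u t (θ + 2 * π) = u t θ)
    (hw : Continuous fun p : ℝ × ℝ => w p.1 p.2)
    (hwper : ∀ t θ, w t (θ + 2 * π) = w t θ)
    (hHilbert : ∀ (t : ℝ) (n : ℤ),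
      fourierCoef (w t) n =
        -Complex.I * (n.sign : ℂ) * fourierCoef (deriv (u t)) n)
    (hpde : ∀ t θ, HasDerivAt (fun s => u s θ)
      (-(deriv (deriv (deriv (u t))) θ) + 6 * u t θ * deriv (u t) θ - w t θ) t) :
    Antitone (fun t => ∫ θ in (-π : ℝ)..π, (u t θ) ^ 2) ∧
    ∀ t, HasDerivAt (fun s => ∫ θ in (-π : ℝ)..π, (u s θ) ^ 2)
        (-(4 * π) * ∑' n : ℤ, (|n| : ℝ) * ‖fourierCoef (u t) n‖ ^ 2) t ∧
      -(4 * π) * ∑' n : ℤ, (|n| : ℝ) * ‖fourierCoef (u t) n‖ ^ 2 ≤ 0 := by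
  set U : ℝ × ℝ → ℝ := fun p => u p.1 p.2 with hU
  set D : ℝ × ℝ → ℝ := fun p => fderiv ℝ U p (1, 0) with hD
  have hDc : Continuous D := (hu.continuous_fderiv (by simp)).clm_apply continuous_const
  have hUD : ∀ t θ, HasDerivAt (fun s => u s θ) (D (t, θ)) t := by
    intro t θ
    have h1 : HasFDerivAt U (fderiv ℝ U (t, θ)) (t, θ) :=
      (hu.differentiable (by simp) (t, θ)).hasFDerivAt
    have h2 : HasDerivAt (fun s : ℝ => (s, θ)) ((1 : ℝ), (0 : ℝ)) t :=
      (hasDerivAt_id t).prodMk (hasDerivAt_const t θ)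
    exact h1.comp_hasDerivAt t h2
  have hDeq : ∀ t θ, D (t, θ) =
      -(deriv (deriv (deriv (u t))) θ) + 6 * u t θ * deriv (u t) θ - w t θ :=
    fun t θ => (hUD t θ).unique (hpde t θ)
  have hUc : Continuous U := hu.continuous
  have huc : ∀ t, Continuous (u t) := fun t =>
    hUc.comp (continuous_const.prodMk continuous_id)
  -- derivative of the integral (differentiation under the integral sign)
  have hderiv : ∀ t : ℝ, HasDerivAt (fun s => ∫ θ in (-π : ℝ)..π, u s θ ^ 2)
      (∫ θ in (-π : ℝ)..π, 2 * u t θ * D (t, θ)) t := by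
    intro t₀
    have hK : IsCompact (Set.Icc (t₀ - 1) (t₀ + 1) ×ˢ Set.Icc (-π) π) :=
      isCompact_Icc.prod isCompact_Icc
    have hcF' : Continuous fun p : ℝ × ℝ => 2 * U p * D p :=
      (continuous_const.mul hUc).mul hDc
    obtain ⟨C, hC⟩ := hK.exists_bound_of_continuousOn hcF'.continuousOn
    have main := intervalIntegral.hasDerivAt_integral_of_dominated_loc_of_deriv_le
      (F := fun s θ => u s θ ^ 2) (F' := fun s θ => 2 * u s θ * D (s, θ))
      (x₀ := t₀) (a := (-π : ℝ)) (b := π) (bound := fun _ => C) (μ := volume)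
      (Metric.ball_mem_nhds t₀ one_pos)
      (Filter.Eventually.of_forall fun s =>
        (((huc s).pow 2).aestronglyMeasurable))
      (((huc t₀).pow 2).intervalIntegrable _ _)
      (((continuous_const.mul (huc t₀)).mul
        (hDc.comp (continuous_const.prodMk continuous_id))).aestronglyMeasurable)
      ?_ (intervalIntegrable_const) ?_
    · exact main.2
    · refine Filter.Eventually.of_forall fun θ hθ s hs => ?_
      have hθ' : θ ∈ Set.Icc (-π) π := by
        have := Set.uIoc_of_le (by linarith [pi_pos] : (-π : ℝ) ≤ π)
        rw [this] at hθ
        exact ⟨hθ.1.le, hθ.2⟩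
      have hs' : s ∈ Set.Icc (t₀ - 1) (t₀ + 1) := by
        rw [Metric.mem_ball, Real.dist_eq, abs_lt] at hs
        constructor <;> linarith [hs.1, hs.2]
      exact hC (s, θ) (Set.mk_mem_prod hs' hθ')
    · refine Filter.Eventually.of_forall fun θ _ s _ => ?_
      have := (hUD s θ).fun_pow 2
      simpa [pow_one, mul_comm, mul_assoc, mul_left_comm] using this
  -- the value of the integral at each time t
  have hval : ∀ t : ℝ, (∫ θ in (-π : ℝ)..π, 2 * u t θ * D (t, θ)) =
      -(4 * π) * ∑' n : ℤ, (|n| : ℝ) * ‖fourierCoef (u t) n‖ ^ 2 := by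
    intro t
    have hvt : ContDiff ℝ (⊤ : ℕ∞) (u t) := hu.comp (contDiff_const.prodMk contDiff_id)
    have hvt' : ContDiff ℝ ((⊤ : ℕ∞) : WithTop ℕ∞) (u t) := hvt.of_le (by simp)
    have h2 : ContDiff ℝ ((⊤ : ℕ∞) : WithTop ℕ∞) (deriv (u t)) :=
      (contDiff_infty_iff_deriv.mp hvt').2
    have h3 : ContDiff ℝ ((⊤ : ℕ∞) : WithTop ℕ∞) (deriv (deriv (u t))) :=
      (contDiff_infty_iff_deriv.mp h2).2
    have hd1 : Differentiable ℝ (u t) := (contDiff_infty_iff_deriv.mp hvt').1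
    have hd2 : Differentiable ℝ (deriv (u t)) := (contDiff_infty_iff_deriv.mp h2).1
    have hd3 : Differentiable ℝ (deriv (deriv (u t))) := (contDiff_infty_iff_deriv.mp h3).1
    have hc1 : Continuous (deriv (u t)) := h2.continuous
    have hc2 : Continuous (deriv (deriv (u t))) := h3.continuous
    have hc3 : Continuous (deriv (deriv (deriv (u t)))) :=
      ((contDiff_infty_iff_deriv.mp h3).2).continuous
    have hwtc : Continuous (w t) := hw.comp (continuous_const.prodMk continuous_id)
    have Pv : Function.Periodic (u t) (2 * π) := fun θ => huper t θ
    have Pv1 : Function.Periodic (deriv (u t)) (2 * π) := periodic_deriv' Pv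
    have Pv2 : Function.Periodic (deriv (deriv (u t))) (2 * π) := periodic_deriv' Pv1
    have hper_eval : ∀ f : ℝ → ℝ, Function.Periodic f (2 * π) → f π = f (-π) := by
      intro f hf
      have := hf (-π); rw [show -π + 2 * π = π by ring] at this; exact this
    -- FTC : the conservative part integrates to zero
    have hΦ : ∀ θ : ℝ, HasDerivAt
        (fun θ => -2 * u t θ * deriv (deriv (u t)) θ + (deriv (u t) θ) ^ 2 + 4 * u t θ ^ 3)
        (2 * u t θ * (-(deriv (deriv (deriv (u t))) θ) + 6 * u t θ * deriv (u t) θ)) θ := by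
      intro θ
      have h1 : HasDerivAt (u t) (deriv (u t) θ) θ := (hd1 θ).hasDerivAt
      have h2' : HasDerivAt (deriv (u t)) (deriv (deriv (u t)) θ) θ := (hd2 θ).hasDerivAt
      have h3' : HasDerivAt (deriv (deriv (u t))) (deriv (deriv (deriv (u t))) θ) θ :=
        (hd3 θ).hasDerivAt
      have := (((h1.const_mul (-2 : ℝ)).fun_mul h3').fun_add (h2'.fun_pow 2)).fun_add ((h1.fun_pow 3).const_mul 4)
      refine this.congr_deriv ?_
      push_cast
      ring
    have hcint : Continuous fun θ =>
        2 * u t θ * (-(deriv (deriv (deriv (u t))) θ) + 6 * u t θ * deriv (u t) θ) :=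
      (continuous_const.mul (huc t)).mul
        (hc3.neg.add ((continuous_const.mul (huc t)).mul hc1))
    have hFTC0 : (∫ θ in (-π : ℝ)..π,
        2 * u t θ * (-(deriv (deriv (deriv (u t))) θ) + 6 * u t θ * deriv (u t) θ)) = 0 := by
      rw [intervalIntegral.integral_eq_sub_of_hasDerivAt (fun θ _ => hΦ θ)
        (hcint.intervalIntegrable _ _)]
      show -2 * u t π * deriv (deriv (u t)) π + deriv (u t) π ^ 2 + 4 * u t π ^ 3
        - (-2 * u t (-π) * deriv (deriv (u t)) (-π) + deriv (u t) (-π) ^ 2 + 4 * u t (-π) ^ 3) = 0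
      rw [hper_eval _ Pv, hper_eval _ Pv1, hper_eval _ Pv2]
      ring
    -- split off the dissipative part
    have hsplit : (∫ θ in (-π : ℝ)..π, 2 * u t θ * D (t, θ)) =
        -2 * ∫ θ in (-π : ℝ)..π, u t θ * w t θ := by
      have hrw : ∀ θ ∈ Set.uIcc (-π : ℝ) π, 2 * u t θ * D (t, θ) =
          2 * u t θ * (-(deriv (deriv (deriv (u t))) θ) + 6 * u t θ * deriv (u t) θ)
            + (-2) * (u t θ * w t θ) := by
        intro θ _; rw [hDeq t θ]; ring
      rw [intervalIntegral.integral_congr hrw,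
        intervalIntegral.integral_add (hcint.intervalIntegrable _ _)
          ((continuous_const.fun_mul ((huc t).fun_mul hwtc)).intervalIntegrable _ _),
        hFTC0, intervalIntegral.integral_const_mul]
      ring
    -- Parseval and the Hilbert-transform characterization
    have hP := parseval (u t) (w t) (huc t) Pv hwtc (fun θ => hwper t θ)
    have hterm : ∀ n : ℤ, (starRingEnd ℂ) (fourierCoef (u t) n) * fourierCoef (w t) n
        = (((|n| : ℝ) * ‖fourierCoef (u t) n‖ ^ 2 : ℝ) : ℂ) := by
      intro n
      rw [hHilbert t n, coef_deriv (u t) hvt Pv n]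
      set z := fourierCoef (u t) n with hz
      have h1 : (starRingEnd ℂ) z * z = ((‖z‖ ^ 2 : ℝ) : ℂ) := by
        rw [mul_comm, Complex.mul_conj, Complex.normSq_eq_norm_sq]
      have hsign : ((n.sign * n : ℤ) : ℂ) = ((|n| : ℤ) : ℂ) := by
        congr 1
        rcases lt_trichotomy n 0 with h | h | h
        · rw [Int.sign_eq_neg_one_of_neg h, abs_of_neg h]; ring
        · simp [h]
        · rw [Int.sign_eq_one_of_pos h, abs_of_pos h]; ring
      calc (starRingEnd ℂ) z * (-Complex.I * (n.sign : ℂ) * (Complex.I * n * z))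
          = ((n.sign * n : ℤ) : ℂ) * ((starRingEnd ℂ) z * z) * (-Complex.I * Complex.I) := by
            push_cast; ring
        _ = ((|n| : ℤ) : ℂ) * ((‖z‖ ^ 2 : ℝ) : ℂ) := by
            rw [hsign, h1, neg_mul, Complex.I_mul_I]; ring
        _ = (((|n| : ℝ) * ‖z‖ ^ 2 : ℝ) : ℂ) := by
            rw [Complex.ofReal_mul, show ((|n| : ℝ) : ℂ) = ((|n| : ℤ) : ℂ) by norm_cast]
    have hP2 : HasSum (fun n : ℤ => (|n| : ℝ) * ‖fourierCoef (u t) n‖ ^ 2)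
        ((1 / (2 * π)) * ∫ θ in (-π : ℝ)..π, u t θ * w t θ) := by
      have h := hP
      simp only [hterm] at h
      rw [show (((1 / (2 * π) : ℝ)) : ℂ) * ((∫ θ in (-π : ℝ)..π, u t θ * w t θ : ℝ) : ℂ)
        = (((1 / (2 * π)) * ∫ θ in (-π : ℝ)..π, u t θ * w t θ : ℝ) : ℂ) by push_cast; ring] at h
      exact (RCLike.hasSum_ofReal ℂ).mp h
    have hS := hP2.tsum_eq
    rw [hsplit, hS]
    field_simp
    ring
  have hnonneg : ∀ t : ℝ, 0 ≤ ∑' n : ℤ, (|n| : ℝ) * ‖fourierCoef (u t) n‖ ^ 2 :=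
    fun t => tsum_nonneg fun n => by positivity
  have hfinal : ∀ t : ℝ,
      -(4 * π) * ∑' n : ℤ, (|n| : ℝ) * ‖fourierCoef (u t) n‖ ^ 2 ≤ 0 := by
    intro t
    have := mul_nonneg (by positivity : (0 : ℝ) ≤ 4 * π) (hnonneg t)
    linarith
  refine ⟨?_, fun t => ⟨?_, hfinal t⟩⟩
  · apply antitone_of_deriv_nonpos
    · exact fun s => (hderiv s).differentiableAt
    · intro s
      rw [(hderiv s).deriv, hval s]
      exact hfinal s
  · have := hderiv t
    rwa [hval t] at this
end

section
/- Let g, v : ℝ → ℝ be 2π-periodic with g continuous and v of class C¹, and assume the antiderivative G(θ) := ∫₀^θ g(φ)dφ is 2π-periodic. Let w and z be 2π-periodic L² functions whose Fourier coefficients satisfy ŵ(n) = −i·sign(n)·Ĝ(n) and ẑ(n) = −i·sign(n)·(v')^(n) for all n ∈ ℤ (i.e., w = 𝓗G and z = 𝓗v'). Then (1/2π)∫_{−π}^{π} g(θ)v(θ) dθ = −(1/2π)∫_{−π}^{π} w(θ)z(θ) dθ. Consequently, the gradient relative to the Kähler inner product b₂(a,b) := (1/2π)∫_{−π}^{π}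 a·(𝓗b') dθ of a functional with L²-functional derivative g is −𝓗(∫₀^θ g(φ)dφ). -/
open Real MeasureTheory intervalIntegral

/-!
Integrating by parts, `∫ g v = -∫ G v'`, the boundary term vanishing by periodicity of `G` and `v`.
By Parseval's identity, `∫ w z = 2π ∑ conj ŵ(n) ẑ(n)`. The multiplier `-i sign n` of the Hilbert
transform has modulus one for `n ≠ 0`, and `v'` has mean zero, so `conj ŵ(n) ẑ(n)` equals
`conj Ĝ(n) (v')^(n)` for every `n`; Parseval backwards gives `∫ w z = ∫ G v'`.
-/

open AddCircle Set Complex ComplexConjugate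

theorem conj_neg_I_sign_mul_mul {n : ℤ} {a b : ℂ} (hb : n = 0 → b = 0) :
    conj (-I * n.sign * a) * (-I * n.sign * b) = conj a * b := by
  rcases eq_or_ne n 0 with rfl | hn
  · simp [hb rfl]
  have hsign : ((n.sign : ℤ) : ℂ) ^ 2 = 1 := by
    exact_mod_cast (sq_abs n.sign).symm.trans (by rw [Int.abs_sign_of_ne_zero hn, one_pow])
  calc conj (-I * n.sign * a) * (-I * n.sign * b)
      = -(I * I) * (n.sign : ℂ) ^ 2 * (conj a * b) := by
        simp only [map_mul, map_neg, conj_I, map_intCast]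
        ring
    _ = conj a * b := by rw [I_mul_I, hsign, neg_neg, one_mul, one_mul]

theorem hasSum_conj_fourierCoeffOn_mul {a b : ℝ} {f g : ℝ → ℂ} (hab : a < b)
    (hf : MemLp f 2 (volume.restrict (Ioc a b))) (hg : MemLp g 2 (volume.restrict (Ioc a b))) :
    HasSum (fun i => conj (fourierCoeffOn hab f i) * fourierCoeffOn hab g i)
      ((b - a)⁻¹ • ∫ x in a..b, conj (f x) * g x) := by
  have := Fact.mk (sub_pos.mpr hab)
  rw [← add_sub_cancel a b] at hf hg
  have hF := hf.memLp_liftIoc.haarAddCircle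
  have hG := hg.memLp_liftIoc.haarAddCircle
  have hinner : inner ℂ hF.toLp hG.toLp = (b - a)⁻¹ • ∫ x in a..b, conj (f x) * g x := by
    rw [L2.inner_def, integral_haarAddCircle,
      show ∫ x in a..b, conj (f x) * g x = ∫ x in a..a + (b - a), conj (f x) * g x by
        rw [add_sub_cancel],
      ← integral_liftIoc_eq_intervalIntegral]
    congr 1
    refine integral_congr_ae ?_
    filter_upwards [Measure.ae_smul_measure hF.coeFn_toLp (ENNReal.ofReal (b - a)),
      Measure.ae_smul_measure hG.coeFn_toLp (ENNReal.ofReal (b - a))] with x hFx hGx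
    rw [RCLike.inner_apply, hFx, hGx, mul_comm]
    rfl
  refine hinner ▸ (fourierBasis.hasSum_inner_mul_inner hF.toLp hG.toLp).congr_fun fun i => ?_
  rw [← inner_conj_symm, ← fourierBasis.repr_apply_apply, ← fourierBasis.repr_apply_apply,
    fourierBasis_repr, fourierBasis_repr, fourierCoeff_congr_ae hF.coeFn_toLp,
    fourierCoeff_congr_ae hG.coeFn_toLp, fourierCoeff_liftIoc_eq, fourierCoeff_liftIoc_eq]
  simp only [add_sub_cancel]

theorem fourierCoef_eq_fourierCoeffOn (f : ℝ → ℝ) (n : ℤ) :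
    fourierCoef f n = fourierCoeffOn (neg_lt_self pi_pos) (fun x => (f x : ℂ)) n := by
  rw [fourierCoeffOn_eq_integral, fourierCoef, sub_neg_eq_add, ← two_mul, real_smul]
  congr 1
  refine integral_congr fun x _ => ?_
  rw [fourier_coe_apply, smul_eq_mul, mul_comm]
  congr 2
  field_simp
  push_cast
  ring

theorem tsum_conj_fourierCoef_mul {f g : ℝ → ℝ} (hf : MemLp f 2 (volume.restrict (Ioc (-π) π)))
    (hg : MemLp g 2 (volume.restrict (Ioc (-π) π))) :
    ∑' n, conj (fourierCoef f n) * fourierCoef g n =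
      (((1 / (2 * π)) * ∫ θ in (-π : ℝ)..π, f θ * g θ : ℝ) : ℂ) := by
  simp only [fourierCoef_eq_fourierCoeffOn]
  refine (hasSum_conj_fourierCoeffOn_mul _ hf.ofReal hg.ofReal).tsum_eq.trans ?_
  rw [sub_neg_eq_add, ← two_mul, ofReal_mul, ← integral_ofReal, ← real_smul, one_div]
  simp

theorem Continuous.memLp_restrict_Ioc {E : Type*} [NormedAddCommGroup E] {f : ℝ → E}
    (hf : Continuous f) (p : ENNReal) (a b : ℝ) : MemLp f p (volume.restrict (Ioc a b)) := by
  obtain ⟨C, hC⟩ := isCompact_Icc.exists_bound_of_continuousOn (hf.continuousOn (s := Icc a b))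
  refine MemLp.of_bound hf.aestronglyMeasurable C ?_
  exact (ae_restrict_iff' measurableSet_Ioc).mpr
    (.of_forall fun x hx => hC x (Ioc_subset_Icc_self hx))

theorem fourierCoef_deriv_zero {v : ℝ → ℝ} (hv : ContDiff ℝ 1 v) (hvπ : v π = v (-π)) :
    fourierCoef (deriv v) 0 = 0 := by
  have hFTC := integral_deriv_eq_sub (fun x _ => (hv.differentiable one_ne_zero).differentiableAt)
    ((hv.continuous_deriv le_rfl).intervalIntegrable (-π) π)
  rw [hvπ, sub_self] at hFTC
  simp [fourierCoef, integral_ofReal, hFTC]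

theorem integral_mul_eq_neg_integral_primitive_mul_deriv {g v : ℝ → ℝ} {a b : ℝ} (c : ℝ)
    (hg : Continuous g) (hv : ContDiff ℝ 1 v)
    (hG : ∫ s in c..b, g s = ∫ s in c..a, g s) (hvab : v b = v a) :
    ∫ θ in a..b, g θ * v θ = -∫ θ in a..b, (∫ s in c..θ, g s) * deriv v θ := by
  have hparts := integral_mul_deriv_eq_deriv_mul (u := fun θ => ∫ s in c..θ, g s)
    (fun x _ => (hg.integral_hasStrictDerivAt c x).hasDerivAt)
    (fun x _ => ((hv.differentiable one_ne_zero) x).hasDerivAt)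
    (hg.intervalIntegrable a b) ((hv.continuous_deriv le_rfl).intervalIntegrable a b)
  rw [hG, hvab, sub_self, zero_sub] at hparts
  rw [hparts, neg_neg]

theorem stmt_17_general (g v w z : ℝ → ℝ)
    (hg : Continuous g) (hv : ContDiff ℝ 1 v)
    (hvper : ∀ θ, v (θ + 2 * π) = v θ)
    (hGper : ∀ θ, (∫ s in (0 : ℝ)..(θ + 2 * π), g s) = ∫ s in (0 : ℝ)..θ, g s)
    (hwL2 : MemLp w 2 (volume.restrict (Set.Ioc (-π : ℝ) π)))
    (hzL2 : MemLp z 2 (volume.restrict (Set.Ioc (-π : ℝ) π)))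
    (hw : ∀ n : ℤ, fourierCoef w n =
      -Complex.I * (n.sign : ℂ) *
        fourierCoef (fun θ => ∫ s in (0 : ℝ)..θ, g s) n)
    (hz : ∀ n : ℤ, fourierCoef z n =
      -Complex.I * (n.sign : ℂ) * fourierCoef (deriv v) n) :
    (1 / (2 * π)) * ∫ θ in (-π : ℝ)..π, g θ * v θ =
      -((1 / (2 * π)) * ∫ θ in (-π : ℝ)..π, w θ * z θ) := by
  set G := fun θ => ∫ s in (0 : ℝ)..θ, g s
  have hGπ : G π = G (-π) := by simpa [neg_add_eq_sub, two_mul] using hGper (-π)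
  have hvπ : v π = v (-π) := by simpa [neg_add_eq_sub, two_mul] using hvper (-π)
  have hGL2 : MemLp G 2 (volume.restrict (Ioc (-π) π)) :=
    (continuous_primitive (fun _ _ => hg.intervalIntegrable _ _) 0).memLp_restrict_Ioc _ _ _
  have hv'L2 := (hv.continuous_deriv le_rfl).memLp_restrict_Ioc 2 (-π) π
  have hpairing : (1 / (2 * π)) * ∫ θ in (-π : ℝ)..π, w θ * z θ =
      (1 / (2 * π)) * ∫ θ in (-π : ℝ)..π, G θ * deriv v θ := by
    refine ofReal_injective ?_
    rw [← tsum_conj_fourierCoef_mul hwL2 hzL2, ← tsum_conj_fourierCoef_mul hGL2 hv'L2]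
    refine tsum_congr fun n => ?_
    rw [hw, hz]
    exact conj_neg_I_sign_mul_mul fun hn => hn ▸ fourierCoef_deriv_zero hv hvπ
  rw [hpairing, integral_mul_eq_neg_integral_primitive_mul_deriv 0 hg hv hGπ hvπ]
  ring

/-- Gradient with respect to the Kähler inner product `b₂(a,b) = ⟨a, 𝓗b'⟩` of a
functional with `L²`-functional derivative `g`: if `g` is continuous and
`2π`-periodic, `v` is `C¹` and `2π`-periodic, the antiderivative
`G(θ) = ∫₀^θ g` is `2π`-periodic, and `w = 𝓗G`, `z = 𝓗v'` are characterized by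
their Fourier coefficients, then `(1/2π)∫ g·v = −(1/2π)∫ w·z`; hence the
`b₂`-gradient is `−𝓗(∫₀^θ g)`. -/
theorem stmt_17 (g v w z : ℝ → ℝ)
    (hg : Continuous g) (hv : ContDiff ℝ 1 v)
    (hgper : ∀ θ, g (θ + 2 * π) = g θ) (hvper : ∀ θ, v (θ + 2 * π) = v θ)
    (hGper : ∀ θ, (∫ s in (0 : ℝ)..(θ + 2 * π), g s) = ∫ s in (0 : ℝ)..θ, g s)
    (hwper : ∀ θ, w (θ + 2 * π) = w θ) (hzper : ∀ θ, z (θ + 2 * π) = z θ)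
    (hwL2 : MemLp w 2 (volume.restrict (Set.Ioc (-π : ℝ) π)))
    (hzL2 : MemLp z 2 (volume.restrict (Set.Ioc (-π : ℝ) π)))
    (hw : ∀ n : ℤ, fourierCoef w n =
      -Complex.I * (n.sign : ℂ) *
        fourierCoef (fun θ => ∫ s in (0 : ℝ)..θ, g s) n)
    (hz : ∀ n : ℤ, fourierCoef z n =
      -Complex.I * (n.sign : ℂ) * fourierCoef (deriv v) n) :
    (1 / (2 * π)) * ∫ θ in (-π : ℝ)..π, g θ * v θ =
      -((1 / (2 * π)) * ∫ θ in (-π : ℝ)..π, w θ * z θ) :=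
  stmt_17_general g v w z hg hv hvper hGper hwL2 hzL2 hw hz
end

section
/- Let u : ℝ × ℝ → ℝ be smooth and 2π-periodic in its second variable θ, and suppose u satisfies the metriplectic evolution equation u_t = u_θ + S(t)·u_{θθ} + Q(t), where S(t) := ∫_{−π}^{π} u(t,θ) dθ and Q(t) := ∫_{−π}^{π} u_θ(t,θ)² dθ. Then the energy t ↦ ∫_{−π}^{π} u(t,θ)²/2 dθ is constant in t, and the entropy t ↦ S(t) = ∫_{−π}^{π} u(t,θ) dθ is nondecreasing, with d/dt S(t) = 2π Q(t) ≥ 0. -/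
open Real MeasureTheory intervalIntegral Metric Set

private lemma periodic_deriv'' (f : ℝ → ℝ) (c : ℝ) (h : ∀ x, f (x + c) = f x) (x : ℝ) :
    deriv f (x + c) = deriv f x := by
  rw [← deriv_comp_add_const f c x]
  congr 1
  exact funext h

private lemma param_hasDerivAt (f f' : ℝ → ℝ → ℝ)
    (hf : ∀ t, Continuous (f t))
    (hf' : Continuous fun p : ℝ × ℝ => f' p.1 p.2)
    (hdiff : ∀ t θ, HasDerivAt (fun s => f s θ) (f' t θ) t) (t₀ : ℝ) :
    HasDerivAt (fun t => ∫ θ in (-π : ℝ)..π, f t θ) (∫ θ in (-π : ℝ)..π, f' t₀ θ) t₀ := by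
  obtain ⟨C, hC⟩ := ((isCompact_Icc (a := t₀ - 1) (b := t₀ + 1)).prod
    (isCompact_uIcc (a := (-π:ℝ)) (b := π))).exists_bound_of_continuousOn hf'.continuousOn
  refine (intervalIntegral.hasDerivAt_integral_of_dominated_loc_of_deriv_le
      (F := f) (F' := f') (bound := fun _ => C) (s := ball t₀ 1) (ball_mem_nhds t₀ one_pos) ?_ ?_ ?_ ?_ ?_ ?_).2
  · exact Filter.Eventually.of_forall fun t => (hf t).aestronglyMeasurable
  · exact (hf t₀).intervalIntegrable _ _
  · exact (hf'.comp (continuous_const.prodMk continuous_id)).aestronglyMeasurable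
  · refine Filter.Eventually.of_forall fun θ hθ t ht => hC (t, θ) ?_
    have ht' : |t - t₀| < 1 := by simpa [Real.dist_eq] using ht
    have h1 := abs_lt.1 ht'
    exact ⟨⟨by linarith [h1.1], by linarith [h1.2]⟩, uIoc_subset_uIcc hθ⟩
  · exact intervalIntegrable_const
  · exact Filter.Eventually.of_forall fun θ _ t _ => hdiff t θ

/-- For the metriplectic evolution equation
`u_t = u_θ + S(t)·u_{θθ} + Q(t)`, where `S(t) = ∫_{−π}^{π} u dθ` and
`Q(t) = ∫_{−π}^{π} (u_θ)² dθ`, with `u` smooth and `2π`-periodic in `θ`: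
the energy `∫ u²/2 dθ` is conserved and the entropy `S(t)` is nondecreasing,
with `d/dt S(t) = 2π Q(t) ≥ 0`. -/
theorem stmt_18 (u : ℝ → ℝ → ℝ)
    (hu : ContDiff ℝ (⊤ : ℕ∞) fun p : ℝ × ℝ => u p.1 p.2)
    (huper : ∀ t θ, u t (θ + 2 * π) = u t θ)
    (hpde : ∀ t θ, HasDerivAt (fun s => u s θ)
      (deriv (u t) θ +
        (∫ θ' in (-π : ℝ)..π, u t θ') * deriv (deriv (u t)) θ +
        ∫ θ' in (-π : ℝ)..π, (deriv (u t) θ') ^ 2) t) :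
    (∀ t, (∫ θ in (-π : ℝ)..π, (u t θ) ^ 2 / 2) =
        ∫ θ in (-π : ℝ)..π, (u 0 θ) ^ 2 / 2) ∧
    Monotone (fun t => ∫ θ in (-π : ℝ)..π, u t θ) ∧
    ∀ t, HasDerivAt (fun s => ∫ θ in (-π : ℝ)..π, u s θ)
        (2 * π * ∫ θ' in (-π : ℝ)..π, (deriv (u t) θ') ^ 2) t ∧
      0 ≤ 2 * π * ∫ θ' in (-π : ℝ)..π, (deriv (u t) θ') ^ 2 := by
  set F : ℝ × ℝ → ℝ := fun p => u p.1 p.2 with hF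
  set G : ℝ × ℝ → ℝ := fun p => fderiv ℝ F p (0, 1) with hGdef
  set G2 : ℝ × ℝ → ℝ := fun p => fderiv ℝ G p (0, 1) with hG2def
  set U1 : ℝ × ℝ → ℝ := fun p => fderiv ℝ F p (1, 0) with hU1def
  have hFd : Differentiable ℝ F := hu.differentiable (by simp)
  have hGsm : ContDiff ℝ (⊤ : ℕ∞) G := (hu.fderiv_right (by simp)).clm_apply contDiff_const
  have hGd : Differentiable ℝ G := hGsm.differentiable (by simp)
  have hGc : Continuous G := hGd.continuous
  have hG2c : Continuous G2 :=
    (((hGsm.fderiv_right (m := (⊤ : ℕ∞)) (by simp)).clm_apply contDiff_const).differentiable (by simp)).continuous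
  have hU1c : Continuous U1 :=
    (((hu.fderiv_right (m := (⊤ : ℕ∞)) (by simp)).clm_apply contDiff_const).differentiable (by simp)).continuous
  -- slice continuity
  have cu : ∀ t, Continuous (u t) :=
    fun t => hFd.continuous.comp (continuous_const.prodMk continuous_id)
  have cG : ∀ t, Continuous (fun θ => G (t, θ)) :=
    fun t => hGc.comp (continuous_const.prodMk continuous_id)
  have cG2 : ∀ t, Continuous (fun θ => G2 (t, θ)) :=
    fun t => hG2c.comp (continuous_const.prodMk continuous_id)
  have cU1 : ∀ t, Continuous (fun θ => U1 (t, θ)) :=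
    fun t => hU1c.comp (continuous_const.prodMk continuous_id)
  -- pointwise derivatives
  have keyθ : ∀ t θ, HasDerivAt (u t) (G (t, θ)) θ := by
    intro t θ
    have h1 : HasDerivAt (fun θ : ℝ => (t, θ)) ((0:ℝ), (1:ℝ)) θ :=
      (hasDerivAt_const θ t).prodMk (hasDerivAt_id θ)
    exact (hFd (t, θ)).hasFDerivAt.comp_hasDerivAt θ h1
  have derivθ : ∀ t θ, deriv (u t) θ = G (t, θ) := fun t θ => (keyθ t θ).deriv
  have derivufun : ∀ t, deriv (u t) = fun θ => G (t, θ) := fun t => funext (derivθ t)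
  have keyGθ : ∀ t θ, HasDerivAt (fun θ' => G (t, θ')) (G2 (t, θ)) θ := by
    intro t θ
    have h1 : HasDerivAt (fun θ : ℝ => (t, θ)) ((0:ℝ), (1:ℝ)) θ :=
      (hasDerivAt_const θ t).prodMk (hasDerivAt_id θ)
    exact (hGd (t, θ)).hasFDerivAt.comp_hasDerivAt θ h1
  have keyθθ : ∀ t θ, HasDerivAt (deriv (u t)) (G2 (t, θ)) θ := by
    intro t θ; rw [derivufun t]; exact keyGθ t θ
  have keyt : ∀ t θ, HasDerivAt (fun s => u s θ) (U1 (t, θ)) t := by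
    intro t θ
    have h1 : HasDerivAt (fun s : ℝ => (s, θ)) ((1:ℝ), (0:ℝ)) t :=
      (hasDerivAt_id t).prodMk (hasDerivAt_const t θ)
    exact (hFd (t, θ)).hasFDerivAt.comp_hasDerivAt t h1
  -- boundary periodicity
  have hππ : -π + 2 * π = π := by ring
  have ubnd : ∀ t, u t π = u t (-π) := by
    intro t; have := huper t (-π); rwa [hππ] at this
  have Gbnd : ∀ t, G (t, π) = G (t, -π) := by
    intro t
    have := periodic_deriv'' (u t) (2 * π) (huper t) (-π)
    rwa [hππ, derivθ, derivθ] at this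
  -- spatial integral identities
  have i1 : ∀ t, (∫ θ in (-π : ℝ)..π, G (t, θ)) = 0 := by
    intro t
    rw [integral_eq_sub_of_hasDerivAt (fun θ _ => keyθ t θ) ((cG t).intervalIntegrable _ _),
      ubnd t, sub_self]
  have i2 : ∀ t, (∫ θ in (-π : ℝ)..π, G2 (t, θ)) = 0 := by
    intro t
    rw [integral_eq_sub_of_hasDerivAt (fun θ _ => keyGθ t θ) ((cG2 t).intervalIntegrable _ _),
      Gbnd t, sub_self]
  have i3 : ∀ t, (∫ θ in (-π : ℝ)..π, u t θ * G (t, θ)) = 0 := by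
    intro t
    have hder : ∀ θ, HasDerivAt (fun θ' => u t θ' ^ 2 / 2) (u t θ * G (t, θ)) θ := by
      intro θ
      have h := ((keyθ t θ).fun_pow 2).div_const 2
      exact h.congr_deriv (by ring)
    rw [integral_eq_sub_of_hasDerivAt (fun θ _ => hder θ)
      (((cu t).mul (cG t)).intervalIntegrable _ _), ubnd t, sub_self]
  have i4 : ∀ t, (∫ θ in (-π : ℝ)..π, (G (t, θ) ^ 2 + u t θ * G2 (t, θ))) = 0 := by
    intro t
    have hder : ∀ θ, HasDerivAt (fun θ' => u t θ' * G (t, θ'))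
        (G (t, θ) ^ 2 + u t θ * G2 (t, θ)) θ := by
      intro θ
      have h := (keyθ t θ).fun_mul (keyGθ t θ)
      exact h.congr_deriv (by ring)
    rw [integral_eq_sub_of_hasDerivAt (fun θ _ => hder θ)
      (((cG t).pow 2 |>.add ((cu t).mul (cG2 t))).intervalIntegrable _ _),
      ubnd t, Gbnd t, sub_self]
  have i5 : ∀ t, (∫ θ in (-π : ℝ)..π, u t θ * G2 (t, θ)) =
      -(∫ θ in (-π : ℝ)..π, G (t, θ) ^ 2) := by
    intro t
    have hsplit := integral_add (μ := volume) (((cG t).fun_pow 2).intervalIntegrable (-π) π)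
      (((cu t).fun_mul (cG2 t)).intervalIntegrable (-π) π)
    have := i4 t
    rw [hsplit] at this
    linarith
  -- identify U1 with the PDE right-hand side
  have eqU1 : ∀ t θ, U1 (t, θ) = G (t, θ) +
      (∫ θ' in (-π : ℝ)..π, u t θ') * G2 (t, θ) +
      ∫ θ' in (-π : ℝ)..π, G (t, θ') ^ 2 := by
    intro t θ
    have h := (keyt t θ).unique (hpde t θ)
    rw [h, derivθ t θ, (keyθθ t θ).deriv]
    congr 1
    simp only [derivθ]
  -- entropy derivative
  have QGnn : ∀ t, 0 ≤ ∫ θ' in (-π : ℝ)..π, G (t, θ') ^ 2 := by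
    intro t
    apply intervalIntegral.integral_nonneg (by linarith [pi_pos] : (-π : ℝ) ≤ π)
    intro θ _; positivity
  have hSd : ∀ t₀, HasDerivAt (fun t => ∫ θ in (-π : ℝ)..π, u t θ)
      (2 * π * ∫ θ' in (-π : ℝ)..π, G (t₀, θ') ^ 2) t₀ := by
    intro t₀
    have h := param_hasDerivAt u (fun t θ => U1 (t, θ)) cu hU1c keyt t₀
    have hval : (∫ θ in (-π : ℝ)..π, U1 (t₀, θ)) =
        2 * π * ∫ θ' in (-π : ℝ)..π, G (t₀, θ') ^ 2 := by
      simp only [eqU1]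
      rw [integral_add (((cG t₀).fun_add (continuous_const.fun_mul (cG2 t₀))).intervalIntegrable _ _)
        (intervalIntegrable_const),
        integral_add ((cG t₀).intervalIntegrable _ _)
        ((continuous_const.fun_mul (cG2 t₀)).intervalIntegrable _ _),
        i1, intervalIntegral.integral_const_mul, i2, intervalIntegral.integral_const]
      rw [smul_eq_mul]
      ring
    rwa [hval] at h
  -- energy derivative is zero
  have hEd : ∀ t₀, HasDerivAt (fun t => ∫ θ in (-π : ℝ)..π, u t θ ^ 2 / 2) 0 t₀ := by
    intro t₀
    have h := param_hasDerivAt (fun t θ => u t θ ^ 2 / 2) (fun t θ => u t θ * U1 (t, θ))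
      (fun t => ((cu t).pow 2).div_const 2)
      (hu.continuous.mul hU1c)
      (fun t θ => by
        have h := ((keyt t θ).fun_pow 2).div_const 2
        exact h.congr_deriv (by ring)) t₀
    have hval : (∫ θ in (-π : ℝ)..π, u t₀ θ * U1 (t₀, θ)) = 0 := by
      have hrw : ∀ θ, u t₀ θ * U1 (t₀, θ) =
          u t₀ θ * G (t₀, θ) +
          (∫ θ' in (-π : ℝ)..π, u t₀ θ') * (u t₀ θ * G2 (t₀, θ)) +
          (∫ θ' in (-π : ℝ)..π, G (t₀, θ') ^ 2) * u t₀ θ := by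
        intro θ; rw [eqU1]; ring
      simp only [hrw]
      rw [integral_add ((((cu t₀).fun_mul (cG t₀)).fun_add
          (continuous_const.fun_mul ((cu t₀).fun_mul (cG2 t₀)))).intervalIntegrable _ _)
        ((continuous_const.fun_mul (cu t₀)).intervalIntegrable _ _),
        integral_add (((cu t₀).fun_mul (cG t₀)).intervalIntegrable _ _)
        ((continuous_const.fun_mul ((cu t₀).fun_mul (cG2 t₀))).intervalIntegrable _ _),
        i3, intervalIntegral.integral_const_mul, intervalIntegral.integral_const_mul, i5]
      ring
    rwa [hval] at h
  refine ⟨?_, ?_, ?_⟩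
  · intro t
    exact is_const_of_deriv_eq_zero (fun s => (hEd s).differentiableAt)
      (fun s => (hEd s).deriv) t 0
  · apply monotone_of_deriv_nonneg (fun s => (hSd s).differentiableAt)
    intro s
    rw [(hSd s).deriv]
    have := QGnn s
    have := pi_pos
    positivity
  · intro t
    have hQ : (∫ θ' in (-π : ℝ)..π, (deriv (u t) θ') ^ 2) =
        ∫ θ' in (-π : ℝ)..π, G (t, θ') ^ 2 := by simp only [derivθ]
    rw [hQ]
    refine ⟨hSd t, ?_⟩
    have := QGnn t
    have := pi_pos
    positivity
end
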